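/- arXiv:1301.1762 — 6 statements merged into one kernel-verified Lean document; each statement's English description precedes it below -/
import Mathlib

section
/- If θ = (θ_0,...,θ_Δ) is a strictly positive log-convex sequence, then the single-variable function f(x) = (∑_{k=0}^{Δ-1} θ_{k+1} C(Δ-1,k) x^k)/(∑_{k=0}^{Δ-1} θ_k C(Δ-1,k) x^k) is monotone nondecreasing on [0,∞). -/
theorem stmt_1 (Δ : ℕ) (hΔ : 3 ≤ Δ) (θ : ℕ → ℝ)
    (hpos : ∀ k ≤ Δ, 0 < θ k)
    (hlc : ∀ k, k + 2 ≤ Δ → θ (k + 1) / θ k ≤ θ (k + 2) / θ (k + 1)) :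
    MonotoneOn
      (fun x : ℝ =>
        (∑ k ∈ Finset.range Δ, θ (k + 1) * ((Δ - 1).choose k : ℝ) * x ^ k) /
          (∑ k ∈ Finset.range Δ, θ k * ((Δ - 1).choose k : ℝ) * x ^ k))
      (Set.Ici (0 : ℝ)) := by
  -- ratio monotonicity: θ(j+1) θ k ≤ θ(k+1) θ j for j ≤ k, k+1 ≤ Δ
  have hratio : ∀ k, k + 1 ≤ Δ → ∀ j ≤ k, θ (j+1) * θ k ≤ θ (k+1) * θ j := by
    intro k
    induction k with
    | zero => intro _ j hj; interval_cases j; exact le_refl _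
    | succ k ih =>
      intro hk j hj
      rcases Nat.eq_or_lt_of_le hj with h | h
      · subst h; exact le_refl _
      · have hj' : j ≤ k := by omega
        have h1 := ih (by omega) j hj'
        have hk0 := hpos k (by omega)
        have hk1 := hpos (k+1) (by omega)
        have h2 : θ (k+1) * θ (k+1) ≤ θ (k+2) * θ k := by
          have h := hlc k (by omega)
          rw [div_le_div_iff₀ hk0 hk1] at h
          linarith
        have hjp := hpos j (by omega)
        nlinarith [mul_le_mul_of_nonneg_right h1 hk1.le,
          mul_le_mul_of_nonneg_right h2 hjp.le]
  set C : ℕ → ℝ := fun k => ((Δ - 1).choose k : ℝ) with hC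
  have hCnn : ∀ k, 0 ≤ C k := fun k => Nat.cast_nonneg _
  set D : ℝ → ℝ := fun x => ∑ k ∈ Finset.range Δ, θ k * C k * x ^ k with hD
  set N : ℝ → ℝ := fun x => ∑ k ∈ Finset.range Δ, θ (k+1) * C k * x ^ k with hN
  have hDpos : ∀ x : ℝ, 0 ≤ x → 0 < D x := by
    intro x hx
    apply Finset.sum_pos'
    · intro i hi
      have hi' : i ≤ Δ := by
        have := Finset.mem_range.mp hi; omega
      exact mul_nonneg (mul_nonneg (hpos i hi').le (hCnn i)) (pow_nonneg hx i)
    · refine ⟨0, Finset.mem_range.mpr (by omega), ?_⟩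
      simp [hC, hpos 0 (by omega)]
  intro x hx y hy hxy
  simp only [Set.mem_Ici] at hx hy
  show N x / D x ≤ N y / D y
  rw [div_le_div_iff₀ (hDpos x hx) (hDpos y hy)]
  -- key: N y * D x - N x * D y ≥ 0
  set a : ℕ → ℕ → ℝ := fun j k =>
    (θ (j+1) * C j * y ^ j) * (θ k * C k * x ^ k)
      - (θ (j+1) * C j * x ^ j) * (θ k * C k * y ^ k) with ha
  have hpair : ∀ j k, j ≤ k → k + 1 ≤ Δ → 0 ≤ a j k + a k j := by
    intro j k hjk hk
    have hA : 0 ≤ θ (k+1) * θ j - θ (j+1) * θ k :=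
      sub_nonneg.mpr (hratio k hk j hjk)
    have hB : 0 ≤ x ^ j * y ^ k - x ^ k * y ^ j := by
      obtain ⟨d, rfl⟩ : ∃ d, k = j + d := ⟨k - j, by omega⟩
      have h1 : x ^ d ≤ y ^ d := pow_le_pow_left₀ hx hxy d
      have h2 : (0:ℝ) ≤ x ^ j * y ^ j :=
        mul_nonneg (pow_nonneg hx j) (pow_nonneg (hx.trans hxy) j)
      have := mul_le_mul_of_nonneg_left h1 h2
      rw [pow_add, pow_add]
      nlinarith
    have key : a j k + a k j
        = (C j * C k) * ((θ (k+1) * θ j - θ (j+1) * θ k)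
            * (x ^ j * y ^ k - x ^ k * y ^ j)) := by
      simp only [ha]; ring
    rw [key]
    exact mul_nonneg (mul_nonneg (hCnn j) (hCnn k)) (mul_nonneg hA hB)
  have hS : 0 ≤ ∑ j ∈ Finset.range Δ, ∑ k ∈ Finset.range Δ, a j k := by
    have hsymm : ∑ j ∈ Finset.range Δ, ∑ k ∈ Finset.range Δ, a k j
        = ∑ j ∈ Finset.range Δ, ∑ k ∈ Finset.range Δ, a j k :=
      Finset.sum_comm
    have h2 : 0 ≤ ∑ j ∈ Finset.range Δ, ∑ k ∈ Finset.range Δ, (a j k + a k j) := by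
      apply Finset.sum_nonneg; intro j hj
      apply Finset.sum_nonneg; intro k hk
      have hj' : j + 1 ≤ Δ := by have := Finset.mem_range.mp hj; omega
      have hk' : k + 1 ≤ Δ := by have := Finset.mem_range.mp hk; omega
      rcases le_total j k with h | h
      · exact hpair j k h hk'
      · have := hpair k j h hj'; linarith
    have h3 : ∑ j ∈ Finset.range Δ, ∑ k ∈ Finset.range Δ, (a j k + a k j)
        = (∑ j ∈ Finset.range Δ, ∑ k ∈ Finset.range Δ, a j k)
          + (∑ j ∈ Finset.range Δ, ∑ k ∈ Finset.range Δ, a k j) := by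
      simp [Finset.sum_add_distrib]
    rw [h3, hsymm] at h2
    linarith
  have hexp : ∑ j ∈ Finset.range Δ, ∑ k ∈ Finset.range Δ, a j k
      = N y * D x - N x * D y := by
    simp only [ha, hN, hD, Finset.sum_sub_distrib, ← Finset.sum_mul_sum]
  rw [hexp] at hS
  linarith
end

section
/- Let σ_k denote the k-th elementary symmetric polynomial in n = Δ-1 variables, and for strictly positive log-convex θ define F(x_1,...,x_n) = (∑_{k=0}^{n} θ_{k+1} σ_k(x)) / (∑_{k=0}^{n} θ_k σ_k(x)). Then ∂F/∂x_i ≥ 0 for every i and every x ≥ 0. -/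
/-- The `k`-th elementary symmetric polynomial in `n` real variables. -/
noncomputable def esymm (n : ℕ) (x : Fin n → ℝ) (k : ℕ) : ℝ :=
  ∑ S ∈ Finset.powersetCard k (Finset.univ : Finset (Fin n)), ∏ i ∈ S, x i

open Finset

/-- elementary symmetric polynomial of the variables other than `i`. -/
noncomputable def esub (n : ℕ) (i : Fin n) (x : Fin n → ℝ) (k : ℕ) : ℝ :=
  ∑ S ∈ ((Finset.univ : Finset (Fin n)).erase i).powersetCard k, ∏ j ∈ S, x j

lemma esub_nonneg (n : ℕ) (i : Fin n) (x : Fin n → ℝ) (hx : ∀ j, 0 ≤ x j) (k : ℕ) :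
    0 ≤ esub n i x k :=
  Finset.sum_nonneg fun S _ => Finset.prod_nonneg fun j _ => hx j

lemma esub_zero (n : ℕ) (i : Fin n) (x : Fin n → ℝ) : esub n i x 0 = 1 := by
  simp [esub]

lemma esub_top (n : ℕ) (i : Fin n) (x : Fin n → ℝ) : esub n i x n = 0 := by
  have hn : 0 < n := i.pos
  have hc : ((Finset.univ : Finset (Fin n)).erase i).card < n := by
    rw [Finset.card_erase_of_mem (Finset.mem_univ i), Finset.card_univ, Fintype.card_fin]
    omega
  simp [esub, Finset.powersetCard_eq_empty.mpr hc]

lemma esymm_update_zero (n : ℕ) (i : Fin n) (x : Fin n → ℝ) (t : ℝ) :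
    esymm n (Function.update x i t) 0 = 1 := by
  simp [esymm]

lemma esymm_update_succ (n k : ℕ) (i : Fin n) (x : Fin n → ℝ) (t : ℝ) :
    esymm n (Function.update x i t) (k + 1) = esub n i x (k + 1) + t * esub n i x k := by
  rw [esymm, ← Finset.sum_filter_add_sum_filter_not _ (fun S => i ∈ S)]
  have h1 : ∑ S ∈ (Finset.powersetCard (k+1) (Finset.univ : Finset (Fin n))).filter
      (fun S => i ∈ S), ∏ j ∈ S, Function.update x i t j = t * esub n i x k := by
    rw [esub, Finset.mul_sum]
    refine Finset.sum_bij' (fun S _ => S.erase i) (fun T _ => insert i T) ?_ ?_ ?_ ?_ ?_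
    · intro S hS
      simp only [Finset.mem_filter, Finset.mem_powersetCard] at hS
      rw [Finset.mem_powersetCard]
      constructor
      · exact Finset.erase_subset_erase i hS.1.1
      · rw [Finset.card_erase_of_mem hS.2, hS.1.2]; omega
    · intro T hT
      rw [Finset.mem_powersetCard] at hT
      have hiT : i ∉ T := fun h => (Finset.mem_erase.mp (hT.1 h)).1 rfl
      simp only [Finset.mem_filter, Finset.mem_powersetCard]
      refine ⟨⟨Finset.subset_univ _, ?_⟩, Finset.mem_insert_self i T⟩
      rw [Finset.card_insert_of_notMem hiT, hT.2]
    · intro S hS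
      simp only [Finset.mem_filter] at hS
      exact Finset.insert_erase hS.2
    · intro T hT
      rw [Finset.mem_powersetCard] at hT
      have hiT : i ∉ T := fun h => (Finset.mem_erase.mp (hT.1 h)).1 rfl
      exact Finset.erase_insert hiT
    · intro S hS
      simp only [Finset.mem_filter] at hS
      rw [← Finset.mul_prod_erase _ _ hS.2, Function.update_self]
      congr 1
      refine Finset.prod_congr rfl fun j hj => ?_
      exact Function.update_of_ne (Finset.mem_erase.mp hj).1 _ _
  have h2 : ∑ S ∈ (Finset.powersetCard (k+1) (Finset.univ : Finset (Fin n))).filter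
      (fun S => i ∉ S), ∏ j ∈ S, Function.update x i t j = esub n i x (k + 1) := by
    rw [esub]
    have he : (Finset.powersetCard (k+1) (Finset.univ : Finset (Fin n))).filter
        (fun S => i ∉ S) = ((Finset.univ : Finset (Fin n)).erase i).powersetCard (k+1) := by
      ext S
      simp only [Finset.mem_filter, Finset.mem_powersetCard, Finset.subset_erase,
        Finset.subset_univ, true_and]
      tauto
    rw [he]
    refine Finset.sum_congr rfl fun S hS => Finset.prod_congr rfl fun j hj => ?_
    rw [Finset.mem_powersetCard, Finset.subset_erase] at hS
    exact Function.update_of_ne (by rintro rfl; exact hS.1.2 hj) _ _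
  rw [h1, h2]; ring

lemma sum_esymm_update (n : ℕ) (hn : 1 ≤ n) (i : Fin n) (x : Fin n → ℝ) (t : ℝ) (φ : ℕ → ℝ) :
    ∑ k ∈ Finset.range (n + 1), φ k * esymm n (Function.update x i t) k =
      (∑ k ∈ Finset.range n, φ k * esub n i x k)
        + t * (∑ k ∈ Finset.range n, φ (k + 1) * esub n i x k) := by
  rw [Finset.sum_range_succ' (fun k => φ k * esymm n (Function.update x i t) k)]
  have : ∀ k ∈ Finset.range n, φ (k+1) * esymm n (Function.update x i t) (k+1)
      = φ (k+1) * esub n i x (k+1) + t * (φ (k+1) * esub n i x k) := by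
    intro k _; rw [esymm_update_succ]; ring
  rw [Finset.sum_congr rfl this, Finset.sum_add_distrib, ← Finset.mul_sum]
  rw [esymm_update_zero]
  have h0 : (∑ k ∈ Finset.range n, φ (k+1) * esub n i x (k+1)) + φ 0 * 1
      = ∑ k ∈ Finset.range n, φ k * esub n i x k := by
    have := Finset.sum_range_succ' (fun k => φ k * esub n i x k) n
    rw [Finset.sum_range_succ] at this
    rw [esub_top, esub_zero] at this
    linarith [this]
  linarith [h0]

theorem stmt_2 (n : ℕ) (hn : 2 ≤ n) (θ : ℕ → ℝ)
    (hpos : ∀ k ≤ n + 1, 0 < θ k)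
    (hlc : ∀ j j', j ≤ j' → j' + 1 ≤ n + 1 → θ (j + 1) * θ j' ≤ θ j * θ (j' + 1))
    (i : Fin n) (x : Fin n → ℝ) (hx : ∀ j, 0 ≤ x j) :
    0 ≤ deriv (fun t : ℝ =>
        (∑ k ∈ Finset.range (n + 1), θ (k + 1) * esymm n (Function.update x i t) k) /
          (∑ k ∈ Finset.range (n + 1), θ k * esymm n (Function.update x i t) k)) (x i) := by
  have hn1 : 1 ≤ n := by omega
  set A : ℕ → ℝ := esub n i x with hA
  have hAnn : ∀ k, 0 ≤ A k := esub_nonneg n i x hx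
  set P : ℝ := ∑ k ∈ Finset.range n, θ k * A k with hP
  set Q : ℝ := ∑ k ∈ Finset.range n, θ (k + 1) * A k with hQ
  set R : ℝ := ∑ k ∈ Finset.range n, θ (k + 2) * A k with hR
  have hfun : (fun t : ℝ =>
        (∑ k ∈ Finset.range (n + 1), θ (k + 1) * esymm n (Function.update x i t) k) /
          (∑ k ∈ Finset.range (n + 1), θ k * esymm n (Function.update x i t) k))
      = fun t : ℝ => (Q + t * R) / (P + t * Q) := by
    funext t
    rw [sum_esymm_update n hn1 i x t θ, sum_esymm_update n hn1 i x t (fun k => θ (k+1))]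
  have hQnn : 0 ≤ Q := Finset.sum_nonneg fun k hk => mul_nonneg
    (le_of_lt (hpos _ (by simp at hk; omega))) (hAnn k)
  have hRnn : 0 ≤ R := Finset.sum_nonneg fun k hk => mul_nonneg
    (le_of_lt (hpos _ (by simp at hk; omega))) (hAnn k)
  have hDpos : 0 < P + x i * Q := by
    have hP0 : 0 < P := by
      have h0 : 0 < θ 0 * A 0 := by
        rw [hA, esub_zero]; simpa using hpos 0 (by omega)
      have : ∀ k ∈ Finset.range n, 0 ≤ θ k * A k := fun k hk => mul_nonneg
        (le_of_lt (hpos _ (by simp at hk; omega))) (hAnn k)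
      calc 0 < θ 0 * A 0 := h0
        _ ≤ P := Finset.single_le_sum this (by simp; omega)
    nlinarith [mul_nonneg (hx i) hQnn]
  -- derivative computation
  have hder : HasDerivAt (fun t : ℝ => (Q + t * R) / (P + t * Q))
      ((R * (P + x i * Q) - (Q + x i * R) * Q) / (P + x i * Q) ^ 2) (x i) := by
    have h1 : HasDerivAt (fun t : ℝ => Q + t * R) R (x i) := by
      simpa using ((hasDerivAt_id (x i)).mul_const R).const_add Q
    have h2 : HasDerivAt (fun t : ℝ => P + t * Q) Q (x i) := by
      simpa using ((hasDerivAt_id (x i)).mul_const Q).const_add P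
    exact h1.div h2 (ne_of_gt hDpos)
  rw [hfun, hder.deriv]
  have hnum : (Q : ℝ) ^ 2 ≤ P * R := by
    have key : Q ≤ ∑ k ∈ Finset.range n, Real.sqrt ((θ k * A k) * (θ (k + 2) * A k)) := by
      refine Finset.sum_le_sum fun k hk => ?_
      simp only [Finset.mem_range] at hk
      have hθ : θ (k + 1) ^ 2 ≤ θ k * θ (k + 2) := by
        have := hlc k (k + 1) (by omega) (by omega)
        nlinarith [this]
      refine Real.le_sqrt_of_sq_le ?_
      nlinarith [hAnn k, sq_nonneg (A k)]
    have hcs : (∑ k ∈ Finset.range n, Real.sqrt ((θ k * A k) * (θ (k + 2) * A k))) ^ 2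
        ≤ P * R := by
      refine Finset.sum_sq_le_sum_mul_sum_of_sq_eq_mul _ ?_ ?_ ?_
      · intro k hk
        exact mul_nonneg (le_of_lt (hpos _ (by simp at hk; omega))) (hAnn k)
      · intro k hk
        exact mul_nonneg (le_of_lt (hpos _ (by simp at hk; omega))) (hAnn k)
      · intro k hk
        refine Real.sq_sqrt ?_
        exact mul_nonneg (mul_nonneg (le_of_lt (hpos _ (by simp at hk; omega))) (hAnn k))
          (mul_nonneg (le_of_lt (hpos _ (by simp at hk; omega))) (hAnn k))
    calc Q ^ 2 ≤ (∑ k ∈ Finset.range n, Real.sqrt ((θ k * A k) * (θ (k + 2) * A k))) ^ 2 := by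
          refine pow_le_pow_left₀ hQnn key 2
      _ ≤ P * R := hcs
  have : 0 ≤ R * (P + x i * Q) - (Q + x i * R) * Q := by nlinarith
  exact div_nonneg this (sq_nonneg _)
end

section
/- For strictly positive θ, the derivative of g(x) = (∑_{k=0}^{Δ-1} θ_k C(Δ-1,k) x^k)^{-1} satisfies |g'(x)| ≤ θ_0^{-1} ψ for all x ≥ 0, where ψ = max_{0 ≤ k ≤ Δ-2} (Δ-1-k) θ_{k+1}/θ_k. -/
/-!
Write `p(y) = ∑_{k ≤ n} c_k y^k` with `c_k = θ_k C(n,k)` and `n = Δ - 1`, so that `g = 1/p`.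
Since `(k+1) C(n,k+1) = (n-k) C(n,k)`, the coefficients of `p'` are `(n-k) θ_{k+1} C(n,k) ≤ ψ c_k`,
hence `0 ≤ p'(x) ≤ ψ p(x)` for `x ≥ 0`. Therefore `|g'| = p'/p² ≤ ψ/p ≤ ψ/p(0) = ψ/θ_0`.
-/

open Finset

lemma abs_deriv_inv_le_of_hasDerivAt {f : ℝ → ℝ} {f' x m ψ : ℝ} (hf : HasDerivAt f f' x)
    (hm : 0 < m) (hmf : m ≤ f x) (hf' : |f'| ≤ ψ * f x) :
    |deriv (fun y => (f y)⁻¹) x| ≤ ψ / m := by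
  have hfx : 0 < f x := hm.trans_le hmf
  have hψ : 0 ≤ ψ := nonneg_of_mul_nonneg_left ((abs_nonneg _).trans hf') hfx
  rw [(hf.fun_inv hfx.ne').deriv, abs_div, abs_neg, abs_of_pos (pow_pos hfx 2)]
  calc |f'| / f x ^ 2 ≤ ψ * f x / f x ^ 2 := by gcongr
    _ = ψ / f x := by field_simp
    _ ≤ ψ / m := div_le_div_of_nonneg_left hψ hm hmf

lemma hasDerivAt_sum_range_mul_pow (c : ℕ → ℝ) (N : ℕ) (x : ℝ) :
    HasDerivAt (fun y => ∑ k ∈ range (N + 1), c k * y ^ k)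
      (∑ k ∈ range N, (k + 1) * c (k + 1) * x ^ k) x := by
  refine (HasDerivAt.fun_sum fun k _ => (hasDerivAt_pow k x).const_mul (c k)).congr_deriv ?_
  rw [sum_range_succ']
  simp only [Nat.cast_add, Nat.cast_one, add_tsub_cancel_right, CharP.cast_eq_zero, zero_mul,
    mul_zero, add_zero]
  exact sum_congr rfl fun k _ => by ring

lemma sum_range_succ_mul_coeff_mul_pow_le {c : ℕ → ℝ} {N : ℕ} {ψ x : ℝ} (hc : ∀ k ≤ N, 0 ≤ c k)
    (hψ : 0 ≤ ψ) (hratio : ∀ k < N, (k + 1) * c (k + 1) ≤ ψ * c k) (hx : 0 ≤ x) :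
    ∑ k ∈ range N, (k + 1) * c (k + 1) * x ^ k ≤ ψ * ∑ k ∈ range (N + 1), c k * x ^ k := by
  rw [sum_range_succ, mul_add, mul_sum]
  have hlast : 0 ≤ ψ * (c N * x ^ N) := by have := hc N le_rfl; positivity
  refine le_add_of_le_of_nonneg (sum_le_sum fun k hk => ?_) hlast
  rw [← mul_assoc]
  exact mul_le_mul_of_nonneg_right (hratio k (mem_range.mp hk)) (pow_nonneg hx k)

lemma abs_deriv_inv_sum_range_mul_pow_le {c : ℕ → ℝ} {N : ℕ} {ψ x : ℝ}
    (hc : ∀ k ≤ N, 0 ≤ c k) (hc0 : 0 < c 0) (hψ : 0 ≤ ψ)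
    (hratio : ∀ k < N, (k + 1) * c (k + 1) ≤ ψ * c k) (hx : 0 ≤ x) :
    |deriv (fun y => (∑ k ∈ range (N + 1), c k * y ^ k)⁻¹) x| ≤ ψ / c 0 := by
  refine abs_deriv_inv_le_of_hasDerivAt (hasDerivAt_sum_range_mul_pow c N x) hc0 ?_ ?_
  · have hterms : ∀ k ∈ range (N + 1), 0 ≤ c k * x ^ k := fun k hk => by
      have := hc k (Nat.lt_succ_iff.mp (mem_range.mp hk)); positivity
    simpa using single_le_sum hterms (mem_range.mpr N.succ_pos)
  · have hderiv_nonneg : 0 ≤ ∑ k ∈ range N, (k + 1) * c (k + 1) * x ^ k :=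
      sum_nonneg fun k hk => by have := hc (k + 1) (mem_range.mp hk); positivity
    rw [abs_of_nonneg hderiv_nonneg]
    exact sum_range_succ_mul_coeff_mul_pow_le hc hψ hratio hx

lemma succ_mul_choose_succ_eq_sub_mul_choose {n k : ℕ} (hk : k ≤ n) :
    ((k : ℝ) + 1) * n.choose (k + 1) = ((n : ℝ) - k) * n.choose k := by
  have h := congrArg (Nat.cast : ℕ → ℝ) (Nat.choose_succ_right_eq n k)
  push_cast [Nat.cast_sub hk] at h
  linarith

theorem stmt_6 (Δ : ℕ) (hΔ : 3 ≤ Δ) (θ : ℕ → ℝ)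
    (hpos : ∀ k ≤ Δ - 1, 0 < θ k)
    (x : ℝ) (hx : 0 ≤ x) :
    |deriv (fun y : ℝ =>
        (∑ k ∈ Finset.range Δ, θ k * ((Δ - 1).choose k : ℝ) * y ^ k)⁻¹) x| ≤
      (θ 0)⁻¹ *
        (Finset.range (Δ - 1)).sup' (Finset.nonempty_range_iff.mpr (by omega))
          (fun k => ((Δ : ℝ) - 1 - k) * θ (k + 1) / θ k) := by
  obtain ⟨n, rfl⟩ : ∃ n, Δ = n + 1 := ⟨Δ - 1, by omega⟩
  simp only [Nat.add_sub_cancel] at hpos ⊢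
  set ψ := (range n).sup' _ fun k => ((↑(n + 1) : ℝ) - 1 - k) * θ (k + 1) / θ k
  have hratio_le : ∀ k < n, ((n : ℝ) - k) * θ (k + 1) ≤ ψ * θ k := fun k hk => by
    have h := le_sup' (fun k => ((↑(n + 1) : ℝ) - 1 - k) * θ (k + 1) / θ k) (mem_range.mpr hk)
    have hcoef : ((↑(n + 1) : ℝ) - 1 - k) = n - k := by push_cast; ring
    rwa [div_le_iff₀ (hpos k (by omega)), hcoef] at h
  have hψ : 0 ≤ ψ := by
    have h : n * θ 1 ≤ ψ * θ 0 := by simpa using hratio_le 0 (by omega)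
    have h1 : 0 < (n : ℝ) * θ 1 := mul_pos (by simp; omega) (hpos 1 (by omega))
    exact nonneg_of_mul_nonneg_left (h1.le.trans h) (hpos 0 (by omega))
  have key := abs_deriv_inv_sum_range_mul_pow_le (c := fun k => θ k * n.choose k) (N := n)
    (fun k hk => by have := hpos k hk; positivity) (by simpa using hpos 0 (by omega)) hψ
    (fun k hk => calc
      ((k : ℝ) + 1) * (θ (k + 1) * n.choose (k + 1))
          = (n - k) * θ (k + 1) * n.choose k := by
            rw [mul_left_comm, succ_mul_choose_succ_eq_sub_mul_choose hk.le]; ring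
      _ ≤ ψ * θ k * n.choose k := mul_le_mul_of_nonneg_right (hratio_le k hk) (Nat.cast_nonneg _)
      _ = ψ * (θ k * n.choose k) := by ring) hx
  simpa only [Nat.choose_zero_right, Nat.cast_one, mul_one, inv_mul_eq_div] using key
end

section
/- For Δ ≥ 3, letting π_j = C(Δ,j)(Δ-2)^{-j} ((Δ-2) + (6-5Δ)j + 2(Δ-1)j²), one has ∑_{j=0}^{Δ} π_j = −((Δ-1)/(Δ-2))^{Δ-1}. -/
/-!
Expanding the quadratic in `j` in the falling-factorial basis `1, j, j (j - 1)` turns the sum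
into a combination of the factorial moments `∑ C(n,j) j^(k) x^j = n^(k) x^k (1 + x)^(n - k)`
of the binomial weights. For `x = 1 / (Δ - 2)` one has `1 + x = (Δ - 1) / (Δ - 2)`, and the
three resulting terms collapse to `-((Δ - 1) / (Δ - 2))^(Δ - 1)`.
-/

open Finset

section FactorialMoments

variable {R : Type*} [CommSemiring R]

theorem sum_range_choose_mul_pow (n : ℕ) (x : R) :
    ∑ j ∈ range (n + 1), (n.choose j : R) * x ^ j = (1 + x) ^ n := by
  rw [add_comm 1 x, add_pow]
  exact sum_congr rfl fun j _ => by rw [one_pow, mul_one, mul_comm]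

theorem sum_range_choose_mul_descFactorial_succ_mul_pow (n k : ℕ) (x : R) :
    ∑ j ∈ range (n + 2), ((n + 1).choose j : R) * j.descFactorial (k + 1) * x ^ j =
      (n + 1) * x * ∑ j ∈ range (n + 1), (n.choose j : R) * j.descFactorial k * x ^ j := by
  rw [sum_range_succ', mul_sum]
  simp only [Nat.zero_descFactorial_succ, Nat.cast_zero, mul_zero, zero_mul, add_zero]
  refine sum_congr rfl fun j _ => ?_
  have hchoose : ((n + 1).choose (j + 1) : R) * ((j : R) + 1) = ((n : R) + 1) * n.choose j := by
    exact_mod_cast congrArg (Nat.cast (R := R)) (Nat.add_one_mul_choose_eq n j).symm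
  calc ((n + 1).choose (j + 1) : R) * ((j + 1).descFactorial (k + 1) : ℕ) * x ^ (j + 1)
      = ((n + 1).choose (j + 1) : R) * ((j : R) + 1) * (j.descFactorial k * x ^ j * x) := by
        rw [Nat.succ_descFactorial_succ]; push_cast; ring
    _ = _ := by rw [hchoose]; ring

theorem sum_range_choose_mul_descFactorial_mul_pow (n k : ℕ) (x : R) :
    ∑ j ∈ range (n + 1), (n.choose j : R) * j.descFactorial k * x ^ j =
      n.descFactorial k * x ^ k * (1 + x) ^ (n - k) := by
  induction k generalizing n with
  | zero => simpa using sum_range_choose_mul_pow n x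
  | succ k ih =>
    cases n with
    | zero => simp
    | succ n =>
      rw [sum_range_choose_mul_descFactorial_succ_mul_pow, ih, Nat.succ_descFactorial_succ,
        Nat.add_sub_add_right]
      push_cast
      ring

end FactorialMoments

theorem sum_range_choose_mul_pow_mul_quadratic {R : Type*} [CommRing R] (n : ℕ) (x a b c : R) :
    ∑ j ∈ range (n + 1), (n.choose j : R) * x ^ j * (a + b * j + c * j ^ 2) =
      a * (1 + x) ^ n + (b + c) * n * x * (1 + x) ^ (n - 1) +
        c * (n * (n - 1)) * x ^ 2 * (1 + x) ^ (n - 2) := by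
  have hsplit : ∀ j : ℕ, (n.choose j : R) * x ^ j * (a + b * j + c * j ^ 2) =
      a * ((n.choose j : R) * j.descFactorial 0 * x ^ j) +
        (b + c) * ((n.choose j : R) * j.descFactorial 1 * x ^ j) +
        c * ((n.choose j : R) * j.descFactorial 2 * x ^ j) := by
    intro j
    rw [Nat.cast_descFactorial_two, Nat.descFactorial_one, Nat.descFactorial_zero]
    push_cast
    ring
  simp only [hsplit, sum_add_distrib, ← mul_sum]
  rw [sum_range_choose_mul_descFactorial_mul_pow, sum_range_choose_mul_descFactorial_mul_pow,
    sum_range_choose_mul_descFactorial_mul_pow, Nat.cast_descFactorial_two,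
    Nat.descFactorial_one, Nat.descFactorial_zero, Nat.sub_zero]
  push_cast
  ring

theorem stmt_14 (Δ : ℕ) (hΔ : 3 ≤ Δ) :
    ∑ j ∈ Finset.range (Δ + 1),
        (Δ.choose j : ℝ) * (1 / ((Δ : ℝ) - 2)) ^ j *
          (((Δ : ℝ) - 2) + (6 - 5 * (Δ : ℝ)) * (j : ℝ) + 2 * ((Δ : ℝ) - 1) * (j : ℝ) ^ 2) =
      -((((Δ : ℝ) - 1) / ((Δ : ℝ) - 2)) ^ (Δ - 1)) := by
  rw [sum_range_choose_mul_pow_mul_quadratic]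
  obtain ⟨m, rfl⟩ : ∃ m, Δ = m + 2 := ⟨Δ - 2, by omega⟩
  have hd : ((m + 2 : ℕ) : ℝ) - 2 ≠ 0 := by
    push_cast; rw [add_sub_cancel_right]; exact_mod_cast (by omega : m ≠ 0)
  rw [show m + 2 - 1 = m + 1 from rfl, Nat.add_sub_cancel]
  generalize ((m + 2 : ℕ) : ℝ) = D at hd ⊢
  have hq : 1 + 1 / (D - 2) = (D - 1) / (D - 2) := by field_simp; ring
  rw [hq, pow_succ, pow_succ]
  field_simp
  ring
end

section
/- For Δ ≥ 3, letting π_j = C(Δ,j)(Δ-2)^{-j} ((Δ-2) + (6-5Δ)j + 2(Δ-1)j²), one has ∑_{j=0}^{Δ} j π_j = Δ ((Δ-1)/(Δ-2))^{Δ-1}. -/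
lemma binom (n : ℕ) (x : ℝ) :
    ∑ j ∈ Finset.range (n+1), (n.choose j : ℝ) * x^j = (1+x)^n := by
  rw [add_comm (1:ℝ) x, add_pow]
  simp [mul_comm]

lemma key (n j : ℕ) : ((j:ℝ)+1) * ((n+1).choose (j+1) : ℝ) = ((n:ℝ)+1) * (n.choose j : ℝ) := by
  have : ((n+1) * (n.choose j) : ℕ) = ((n+1).choose (j+1)) * (j+1) := by
    simpa [Nat.succ_eq_add_one] using Nat.add_one_mul_choose_eq n j
  have h2 := congrArg (fun m : ℕ => (m : ℝ)) this
  push_cast at h2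
  linarith

lemma s1 (n : ℕ) (x : ℝ) :
    ∑ j ∈ Finset.range (n+2), (j:ℝ) * ((n+1).choose j : ℝ) * x^j
      = ((n:ℝ)+1) * x * (1+x)^n := by
  rw [Finset.sum_range_succ']
  simp only [Nat.cast_zero, zero_mul, pow_zero, add_zero]
  have : ∀ j ∈ Finset.range (n+1),
      ((j+1 : ℕ):ℝ) * ((n+1).choose (j+1) : ℝ) * x^(j+1)
        = (((n:ℝ)+1) * x) * ((n.choose j : ℝ) * x^j) := by
    intro j _
    push_cast
    rw [key n j]; ring
  rw [Finset.sum_congr rfl this, ← Finset.mul_sum, binom]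

lemma s2 (n : ℕ) (x : ℝ) :
    ∑ j ∈ Finset.range (n+3), (j:ℝ)^2 * ((n+2).choose j : ℝ) * x^j
      = ((n:ℝ)+2) * x * (((n:ℝ)+1) * x * (1+x)^n + (1+x)^(n+1)) := by
  rw [Finset.sum_range_succ']
  simp only [Nat.cast_zero, zero_pow, ne_eq, OfNat.ofNat_ne_zero, not_false_eq_true,
    zero_mul, pow_zero, add_zero]
  have : ∀ j ∈ Finset.range (n+2),
      ((j+1 : ℕ):ℝ)^2 * ((n+2).choose (j+1) : ℝ) * x^(j+1)
        = (((n:ℝ)+2) * x) * ((j:ℝ) * ((n+1).choose j : ℝ) * x^j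
            + ((n+1).choose j : ℝ) * x^j) := by
    intro j _
    push_cast
    have h := key (n+1) j
    push_cast at h
    have : ((j:ℝ)+1)^2 * ((n+2).choose (j+1) : ℝ)
        = ((j:ℝ)+1) * (((n:ℝ)+2) * ((n+1).choose j : ℝ)) := by
      rw [pow_two, mul_assoc, h]; push_cast; ring
    rw [this]; ring
  rw [Finset.sum_congr rfl this, ← Finset.mul_sum, Finset.sum_add_distrib, s1, binom]

lemma s3 (n : ℕ) (x : ℝ) :
    ∑ j ∈ Finset.range (n+4), (j:ℝ)^3 * ((n+3).choose j : ℝ) * x^j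
      = ((n:ℝ)+3) * x *
        (((n:ℝ)+2) * x * (((n:ℝ)+1) * x * (1+x)^n + (1+x)^(n+1))
          + 2 * (((n:ℝ)+2) * x * (1+x)^(n+1)) + (1+x)^(n+2)) := by
  rw [Finset.sum_range_succ']
  simp only [Nat.cast_zero, zero_pow, ne_eq, OfNat.ofNat_ne_zero, not_false_eq_true,
    zero_mul, pow_zero, add_zero]
  have : ∀ j ∈ Finset.range (n+3),
      ((j+1 : ℕ):ℝ)^3 * ((n+3).choose (j+1) : ℝ) * x^(j+1)
        = (((n:ℝ)+3) * x) * ((j:ℝ)^2 * ((n+2).choose j : ℝ) * x^j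
            + 2 * ((j:ℝ) * ((n+2).choose j : ℝ) * x^j)
            + ((n+2).choose j : ℝ) * x^j) := by
    intro j _
    push_cast
    have h := key (n+2) j
    push_cast at h
    have : ((j:ℝ)+1)^3 * ((n+3).choose (j+1) : ℝ)
        = ((j:ℝ)+1)^2 * (((n:ℝ)+3) * ((n+2).choose j : ℝ)) := by
      rw [pow_succ, mul_assoc, h]; push_cast; ring
    rw [this]; ring
  rw [Finset.sum_congr rfl this, ← Finset.mul_sum, Finset.sum_add_distrib,
    Finset.sum_add_distrib, s2, ← Finset.mul_sum, s1, binom]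
  push_cast; ring

theorem stmt_15 (Δ : ℕ) (hΔ : 3 ≤ Δ) :
    ∑ j ∈ Finset.range (Δ + 1),
        (j : ℝ) * ((Δ.choose j : ℝ) * (1 / ((Δ : ℝ) - 2)) ^ j *
          (((Δ : ℝ) - 2) + (6 - 5 * (Δ : ℝ)) * (j : ℝ) + 2 * ((Δ : ℝ) - 1) * (j : ℝ) ^ 2)) =
      (Δ : ℝ) * (((Δ : ℝ) - 1) / ((Δ : ℝ) - 2)) ^ (Δ - 1) := by
  obtain ⟨d, rfl⟩ : ∃ d, Δ = d + 3 := ⟨Δ - 3, by omega⟩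
  have ht : ((d:ℝ)+1) ≠ 0 := by positivity
  set x : ℝ := 1 / (((d:ℕ):ℝ) + 3 - 2) with hx
  have hx1 : x = 1 / ((d:ℝ)+1) := by rw [hx]; ring_nf
  have hcongr : ∀ j ∈ Finset.range (d + 3 + 1),
      (j : ℝ) * (((d+3).choose j : ℝ) * x ^ j *
          ((((d:ℕ):ℝ) + 3 - 2) + (6 - 5 * (((d:ℕ):ℝ)+3)) * (j : ℝ) + 2 * ((((d:ℕ):ℝ)+3) - 1) * (j : ℝ) ^ 2))
        = (((d:ℝ)+1)) * ((j:ℝ) * (((d+3).choose j : ℝ)) * x ^ j)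
          + (6 - 5 * ((d:ℝ)+3)) * ((j:ℝ)^2 * (((d+3).choose j : ℝ)) * x ^ j)
          + (2 * ((d:ℝ)+2)) * ((j:ℝ)^3 * (((d+3).choose j : ℝ)) * x ^ j) := by
    intro j _
    ring
  push_cast
  push_cast at hcongr
  rw [show d + 3 + 1 = (d+2) + 2 from rfl] at *
  rw [Finset.sum_congr rfl hcongr]
  rw [Finset.sum_add_distrib, Finset.sum_add_distrib, ← Finset.mul_sum, ← Finset.mul_sum,
    ← Finset.mul_sum]
  rw [show (d+2)+2 = (d+1)+3 from rfl, s2 (d+1) x]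
  rw [show (d+1)+3 = d+4 from rfl, s3 d x]
  rw [show d+4 = (d+2)+2 from rfl, s1 (d+2) x]
  have hy : ((d:ℝ) + 3 - 1) / ((d:ℝ) + 3 - 2) = ((d:ℝ)+2)/((d:ℝ)+1) := by
    rw [show ((d:ℝ)+3-1)=((d:ℝ)+2) by ring, show ((d:ℝ)+3-2)=((d:ℝ)+1) by ring]
  rw [hy, hx1]
  have h2 : (1 + 1/((d:ℝ)+1)) = ((d:ℝ)+2)/((d:ℝ)+1) := by field_simp; ring
  rw [h2]
  set u : ℝ := ((d:ℝ)+2)/((d:ℝ)+1) with hu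
  have p1 : u^(d+1) = u^d * u := pow_succ u d
  have p2 : u^(d+2) = u^d * u * u := by
    rw [show d+2 = (d+1)+1 from rfl, pow_succ, pow_succ]
  rw [p2, p1]
  rw [hu]
  push_cast
  field_simp
  ring
end

section
/- Suppose θ is strictly positive log-convex and x ≥ (3/Δ)(θ_0/θ_1) with Δ ≥ 3. Then for all M ≥ 1, M g(Mx) ≤ g(x), where g(y) = (∑_{k=0}^{Δ-1} C(Δ-1,k) θ_k y^k)^{-1}. -/
set_option maxHeartbeats 1600000 in
theorem stmt_18 (Δ : ℕ) (hΔ : 3 ≤ Δ) (θ : ℕ → ℝ)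
    (hθ : ∀ k ≤ Δ - 1, 0 < θ k)
    (hlc : ∀ k, k + 2 ≤ Δ - 1 → θ (k + 1) / θ k ≤ θ (k + 2) / θ (k + 1))
    (x : ℝ) (hx : 3 / (Δ : ℝ) * (θ 0 / θ 1) ≤ x)
    (M : ℝ) (hM : 1 ≤ M) :
    M * (∑ k ∈ Finset.range Δ, ((Δ - 1).choose k : ℝ) * θ k * (M * x) ^ k)⁻¹ ≤
      (∑ k ∈ Finset.range Δ, ((Δ - 1).choose k : ℝ) * θ k * x ^ k)⁻¹ := by
  have hθ0 := hθ 0 (by omega)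
  have hθ1 := hθ 1 (by omega)
  have hθ2 := hθ 2 (by omega)
  have hΔR : (3:ℝ) ≤ (Δ:ℝ) := by exact_mod_cast hΔ
  have hΔpos : (0:ℝ) < (Δ:ℝ) := by linarith
  have hxpos : 0 < x := lt_of_lt_of_le (by positivity) hx
  have hMpos : 0 < M := by linarith
  have hMx : 0 < M * x := by positivity
  have hCpos : ∀ k ∈ Finset.range Δ, (0:ℝ) < ((Δ - 1).choose k : ℝ) := by
    intro k hk
    rw [Finset.mem_range] at hk
    have : k ≤ Δ - 1 := by omega
    exact_mod_cast Nat.choose_pos this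
  have hsum : ∀ y : ℝ, 0 < y →
      0 < ∑ k ∈ Finset.range Δ, ((Δ - 1).choose k : ℝ) * θ k * y ^ k := by
    intro y hy
    apply Finset.sum_pos
    · intro k hk
      have hk' : k ≤ Δ - 1 := by rw [Finset.mem_range] at hk; omega
      exact mul_pos (mul_pos (hCpos k hk) (hθ k hk')) (pow_pos hy k)
    · exact ⟨0, Finset.mem_range.mpr (by omega)⟩
  have hSx := hsum x hxpos
  have hSMx := hsum (M * x) hMx
  rw [← div_eq_mul_inv, ← one_div, div_le_div_iff₀ hSMx hSx, one_mul]
  -- key inequality: θ 0 ≤ C2 * θ 2 * x ^ 2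
  have hlc0 := hlc 0 (by omega)
  have h12 : θ 1 * θ 1 ≤ θ 0 * θ 2 := by
    rw [div_le_div_iff₀ hθ0 hθ1] at hlc0
    nlinarith [hlc0]
  have hxa : 3 * θ 0 ≤ x * ((Δ:ℝ) * θ 1) := by
    have h' : (3 * θ 0) / ((Δ:ℝ) * θ 1) ≤ x := by
      rw [div_mul_div_comm] at hx; exact hx
    exact (div_le_iff₀ (by positivity)).mp h'
  have hC2 : (Δ:ℝ)^2 ≤ 9 * ((Δ - 1).choose 2 : ℝ) := by
    have hn : ((Δ - 1 : ℕ) : ℝ) = (Δ:ℝ) - 1 := by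
      have : (1:ℕ) ≤ Δ := by omega
      push_cast [Nat.cast_sub this]; ring
    rw [Nat.cast_choose_two, hn]
    nlinarith [hΔR]
  have hkey : θ 0 ≤ ((Δ - 1).choose 2 : ℝ) * θ 2 * x ^ 2 := by
    have hC2pos : (0:ℝ) < ((Δ - 1).choose 2 : ℝ) := hCpos 2 (Finset.mem_range.mpr (by omega))
    obtain ⟨c, hc, hcpos⟩ : ∃ c : ℝ, ((Δ - 1).choose 2 : ℝ) = c ∧ 0 < c := ⟨_, rfl, hC2pos⟩
    rw [hc] at hC2 ⊢
    have hsq : (3 * θ 0) * (3 * θ 0) ≤ (x * ((Δ:ℝ) * θ 1)) * (x * ((Δ:ℝ) * θ 1)) :=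
      mul_self_le_mul_self (by positivity) hxa
    have hx2 : (0:ℝ) < x ^ 2 := by positivity
    have t1 : 9 * (θ 0 * θ 0) ≤ x ^ 2 * ((Δ:ℝ) ^ 2 * (θ 1 * θ 1)) := by nlinarith [hsq]
    have t2 : x ^ 2 * ((Δ:ℝ) ^ 2 * (θ 1 * θ 1)) ≤ x ^ 2 * ((9 * c) * (θ 1 * θ 1)) := by
      gcongr
    have t3 : x ^ 2 * ((9 * c) * (θ 1 * θ 1)) ≤ x ^ 2 * ((9 * c) * (θ 0 * θ 2)) := by
      gcongr
    have e : x ^ 2 * ((9 * c) * (θ 0 * θ 2)) = 9 * (θ 0 * (c * θ 2 * x ^ 2)) := by ring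
    have hfin : θ 0 * θ 0 ≤ θ 0 * (c * θ 2 * x ^ 2) := by linarith [t1, t2, t3]
    exact le_of_mul_le_mul_left hfin hθ0
  -- rewrite as nonnegativity of sum of differences
  rw [Finset.mul_sum, ← sub_nonneg, ← Finset.sum_sub_distrib]
  set f : ℕ → ℝ := fun k =>
    ((Δ - 1).choose k : ℝ) * θ k * (M * x) ^ k - M * (((Δ - 1).choose k : ℝ) * θ k * x ^ k) with hf
  have hsplit : ∑ k ∈ Finset.range Δ, f k =
      (∑ k ∈ Finset.range 3, f k) + ∑ k ∈ Finset.Ico 3 Δ, f k :=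
    (Finset.sum_range_add_sum_Ico f hΔ).symm
  rw [hsplit]
  have h3 : 0 ≤ ∑ k ∈ Finset.range 3, f k := by
    have e : ∑ k ∈ Finset.range 3, f k = f 0 + f 1 + f 2 := by
      simp [Finset.sum_range_succ]
    rw [e]
    simp only [hf]
    obtain ⟨c2, hc2, hc2pos⟩ : ∃ c : ℝ, ((Δ - 1).choose 2 : ℝ) = c ∧ 0 < c :=
      ⟨_, rfl, hCpos 2 (Finset.mem_range.mpr (by omega))⟩
    rw [hc2] at hkey ⊢
    have hc0 : ((Δ - 1).choose 0 : ℝ) = 1 := by norm_num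
    rw [hc0]
    have hM2 : (0:ℝ) ≤ M ^ 2 - M := by nlinarith [sq_nonneg M]
    have key2 : 0 ≤ θ 0 * (1 - M) + (c2 * θ 2 * x ^ 2) * (M ^ 2 - M) := by
      nlinarith [mul_le_mul_of_nonneg_right hkey hM2, sq_nonneg (M - 1), hθ0.le]
    nlinarith [key2]
  have hIco : 0 ≤ ∑ k ∈ Finset.Ico 3 Δ, f k := by
    apply Finset.sum_nonneg
    intro k hk
    rw [Finset.mem_Ico] at hk
    have hk' : k ≤ Δ - 1 := by omega
    have hMk : M ≤ M ^ k := by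
      calc M = M ^ 1 := (pow_one M).symm
      _ ≤ M ^ k := pow_le_pow_right₀ hM (by omega)
    simp only [hf]
    have hC : (0:ℝ) ≤ ((Δ - 1).choose k : ℝ) := by positivity
    have : M * x ^ k ≤ M ^ k * x ^ k :=
      mul_le_mul_of_nonneg_right hMk (by positivity)
    rw [mul_pow]
    have h2 := mul_le_mul_of_nonneg_left this (mul_nonneg hC (le_of_lt (hθ k hk')))
    linarith [h2]
  linarith
end
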